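/- (Border Newton Identities.) Let f ∈ ℂ[x_1,…,x_n] be homogeneous of degree d and suppose there exist γ ∈ ℂ, an integer M ≥ 1, and homogeneous linear forms ℓ'_1, …, ℓ'_m in x_1,…,x_n with coefficients in ℂ((ε)) such that γ ε^{−M} (∏_{i=1}^m (1 + ℓ'_i) − 1) has all coefficients in ℂ[[ε]] and is ≡ f (mod ε). Then the border Waring rank of f satisfies bWR(f) ≤ m. -/

import Mathlib

open MvPolynomial

noncomputable section

/-- All Laurent-series coefficients of `F` lie in `ℂ[[ε]]`, i.e. they have
no terms of negative order. -/
def HasRegularCoeffs {σ : Type*} (F : MvPolynomial σ (LaurentSeries ℂ)) : Prop :=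
  ∀ (m : σ →₀ ℕ) (k : ℤ), k < 0 → (F.coeff m).coeff k = 0

/-- `F` has all coefficients in `ℂ[[ε]]` and `F ≡ f (mod ε)`, i.e. substituting
`ε = 0` into the coefficients of `F` yields `f`. -/
def ApproxTo {σ : Type*} (F : MvPolynomial σ (LaurentSeries ℂ)) (f : MvPolynomial σ ℂ) : Prop :=
  HasRegularCoeffs F ∧ ∀ m : σ →₀ ℕ, (F.coeff m).coeff 0 = f.coeff m

/-- The Waring rank of `f` as a form of degree `d`: the least `r` such that `f` is a
sum of `r` `d`-th powers of homogeneous linear forms over `ℂ`. -/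
def waringRank {n : ℕ} (f : MvPolynomial (Fin n) ℂ) (d : ℕ) : ℕ :=
  sInf {r | ∃ ℓ : Fin r → MvPolynomial (Fin n) ℂ,
    (∀ i, (ℓ i).IsHomogeneous 1) ∧ f = ∑ i, ℓ i ^ d}

/-- The border Waring rank of `f` as a form of degree `d`: the least `r` such that there
are homogeneous linear forms `ℓ₁, …, ℓ_r` with coefficients in `ℂ((ε))` whose sum of
`d`-th powers has all coefficients in `ℂ[[ε]]` and is `≡ f (mod ε)`. -/
def borderWaringRank {n : ℕ} (f : MvPolynomial (Fin n) ℂ) (d : ℕ) : ℕ :=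
  sInf {r | ∃ ℓ : Fin r → MvPolynomial (Fin n) (LaurentSeries ℂ),
    (∀ i, (ℓ i).IsHomogeneous 1) ∧ ApproxTo (∑ i, ℓ i ^ d) f}

/-!
Put `s = γ ε^{-M}` and `E_t = s · e_t(ℓ')`. As the `ℓ'_i` are linear forms, `E_t` is the
degree-`t` part of `s (∏ (1 + ℓ'_i) - 1)`, so `E_t ≡ f` for `t = d` and `E_t ≡ 0` for the other
`t ≥ 1`. Newton's identities multiplied by `s` express `s p_k(ℓ')` through `E_k` and the products
`s⁻¹ E_i · s p_{k-i}`; since `s⁻¹ = γ⁻¹ ε^M` is a power series, induction on `k` gives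
`s p_d(ℓ') ≡ (-1)^{d+1} d f`. After the substitution `ε ↦ ε^d` the scalar `s / ((-1)^{d+1} d)`
becomes a `d`-th power `(β ε^{-M})^d`, which is absorbed into the linear forms.
-/

open Finset
open scoped LaurentSeries PowerSeries

theorem LaurentSeries.exists_coe_eq_iff {K : Type*} [Field K] {x : K⸨X⸩} :
    (∃ g : K⟦X⟧, (g : K⸨X⸩) = x) ↔ ∀ k < 0, x.coeff k = 0 := by
  rw [← val_le_one_iff_eq_coe, ← WithZero.exp_zero, ← neg_zero,
    valuation_le_iff_coeff_lt_eq_zero, neg_zero]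

theorem PowerSeries.coeff_coe_zero {R : Type*} [Semiring R] (g : R⟦X⟧) :
    (g : R⸨X⸩).coeff 0 = constantCoeff g := by
  simpa using LaurentSeries.coeff_coe_powerSeries g 0

namespace LaurentSeries

variable {R : Type*} [Semiring R] {d : ℕ}

def expand (d : ℕ) (hd : 0 < d) : R⸨X⸩ →+* R⸨X⸩ :=
  HahnSeries.embDomainRingHom (AddMonoidHom.mulLeft (d : ℤ))
    (mul_right_injective₀ (by positivity)) fun _ _ => mul_le_mul_iff_right₀ (by positivity)

theorem coeff_expand_mul (hd : 0 < d) (x : R⸨X⸩) (a : ℤ) :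
    (expand d hd x).coeff (d * a) = x.coeff a :=
  HahnSeries.embDomain_coeff (a := a)

theorem coeff_expand_of_not_dvd (hd : 0 < d) (x : R⸨X⸩) {k : ℤ} (hk : ¬(d : ℤ) ∣ k) :
    (expand d hd x).coeff k = 0 :=
  HahnSeries.embDomain_of_notMem_range fun ⟨a, ha⟩ => hk ⟨a, ha.symm⟩

theorem expand_single (hd : 0 < d) (a : ℤ) (r : R) :
    expand d hd (HahnSeries.single a r) = HahnSeries.single (d * a) r :=
  HahnSeries.embDomain_single

end LaurentSeries

section ApproxTo

variable {σ : Type*} {F G : MvPolynomial σ ℂ⸨X⸩} {f g : MvPolynomial σ ℂ}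

theorem approxTo_iff_exists_lift : ApproxTo F f ↔ ∃ P : MvPolynomial σ ℂ⟦X⟧,
    map (HahnSeries.ofPowerSeries ℤ ℂ) P = F ∧ map PowerSeries.constantCoeff P = f := by
  constructor
  · rintro ⟨hreg, hzero⟩
    obtain ⟨P, rfl⟩ : F ∈ Set.range (map (HahnSeries.ofPowerSeries ℤ ℂ)) := by
      rw [mem_range_map_iff_coeffs_subset]
      intro c hc
      obtain ⟨m, -, rfl⟩ := mem_coeffs_iff.mp hc
      exact LaurentSeries.exists_coe_eq_iff.mpr (hreg m)
    refine ⟨P, rfl, ?_⟩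
    ext m
    rw [← hzero, coeff_map, coeff_map, PowerSeries.coeff_coe_zero]
  · rintro ⟨P, rfl, rfl⟩
    refine ⟨fun m k hk => ?_, fun m => ?_⟩
    · rw [coeff_map, PowerSeries.coeff_coe, if_pos hk]
    · rw [coeff_map, coeff_map, PowerSeries.coeff_coe_zero]

theorem approxTo_zero : ApproxTo (0 : MvPolynomial σ ℂ⸨X⸩) 0 :=
  approxTo_iff_exists_lift.mpr ⟨0, map_zero _, map_zero _⟩

theorem approxTo_C_coe (c : ℂ⟦X⟧) :
    ApproxTo (C (c : ℂ⸨X⸩) : MvPolynomial σ ℂ⸨X⸩) (C (PowerSeries.constantCoeff c)) :=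
  approxTo_iff_exists_lift.mpr ⟨C c, map_C .., map_C ..⟩

namespace ApproxTo

theorem unique (hf : ApproxTo F f) (hg : ApproxTo F g) : f = g := by
  ext m
  rw [← hf.2, hg.2]

theorem add (hF : ApproxTo F f) (hG : ApproxTo G g) : ApproxTo (F + G) (f + g) := by
  obtain ⟨P, rfl, rfl⟩ := approxTo_iff_exists_lift.mp hF
  obtain ⟨Q, rfl, rfl⟩ := approxTo_iff_exists_lift.mp hG
  exact approxTo_iff_exists_lift.mpr ⟨P + Q, map_add .., map_add ..⟩

theorem sub (hF : ApproxTo F f) (hG : ApproxTo G g) : ApproxTo (F - G) (f - g) := by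
  obtain ⟨P, rfl, rfl⟩ := approxTo_iff_exists_lift.mp hF
  obtain ⟨Q, rfl, rfl⟩ := approxTo_iff_exists_lift.mp hG
  exact approxTo_iff_exists_lift.mpr ⟨P - Q, map_sub .., map_sub ..⟩

theorem mul (hF : ApproxTo F f) (hG : ApproxTo G g) : ApproxTo (F * G) (f * g) := by
  obtain ⟨P, rfl, rfl⟩ := approxTo_iff_exists_lift.mp hF
  obtain ⟨Q, rfl, rfl⟩ := approxTo_iff_exists_lift.mp hG
  exact approxTo_iff_exists_lift.mpr ⟨P * Q, map_mul .., map_mul ..⟩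

theorem sum {ι : Type*} (s : Finset ι) {F : ι → MvPolynomial σ ℂ⸨X⸩}
    {f : ι → MvPolynomial σ ℂ} (h : ∀ i ∈ s, ApproxTo (F i) (f i)) :
    ApproxTo (∑ i ∈ s, F i) (∑ i ∈ s, f i) := by
  classical
  induction s using Finset.induction_on with
  | empty => simpa using approxTo_zero
  | insert i s hi ih =>
    rw [sum_insert hi, sum_insert hi]
    exact (h i (mem_insert_self i s)).add (ih fun j hj => h j (mem_insert_of_mem hj))

theorem homogeneousComponent (hF : ApproxTo F f) (t : ℕ) :
    ApproxTo (homogeneousComponent t F) (homogeneousComponent t f) := by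
  obtain ⟨P, rfl, rfl⟩ := approxTo_iff_exists_lift.mp hF
  refine approxTo_iff_exists_lift.mpr ⟨homogeneousComponent t P, ?_, ?_⟩ <;>
  · ext m
    simp only [coeff_map, coeff_homogeneousComponent]
    split_ifs <;> simp

theorem map_expand (h : ApproxTo F f) {d : ℕ} (hd : 0 < d) :
    ApproxTo (map (LaurentSeries.expand d hd) F) f := by
  refine ⟨fun m k hk => ?_, fun m => ?_⟩
  · rw [coeff_map]
    by_cases hdk : (d : ℤ) ∣ k
    · obtain ⟨a, rfl⟩ := hdk
      rw [LaurentSeries.coeff_expand_mul]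
      exact h.1 m a (neg_of_mul_neg_right hk (by positivity))
    · exact LaurentSeries.coeff_expand_of_not_dvd hd _ hdk
  · simpa [coeff_map] using LaurentSeries.coeff_expand_mul hd (F.coeff m) 0 ▸ h.2 m

end ApproxTo

end ApproxTo

namespace MvPolynomial

variable {σ ι R : Type*} [Fintype ι]

theorem homogeneousComponent_one [CommSemiring R] (t : ℕ) :
    homogeneousComponent t (1 : MvPolynomial σ R) = if t = 0 then 1 else 0 := by
  rcases t.eq_zero_or_pos with rfl | ht
  · simp [homogeneousComponent_zero]
  · simp [ht.ne', homogeneousComponent_eq_zero _ _ (totalDegree_one.trans_lt ht)]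

theorem homogeneousComponent_prod_one_add [CommSemiring R] {x : ι → MvPolynomial σ R}
    (hx : ∀ i, (x i).IsHomogeneous 1) (t : ℕ) :
    homogeneousComponent t (∏ i, (1 + x i)) = aeval x (esymm ι R t) := by
  have hprod (A : Finset ι) : (∏ i ∈ A, x i).IsHomogeneous #A := by
    simpa using IsHomogeneous.prod A x (fun _ => 1) fun i _ => hx i
  simp only [prod_one_add, map_sum, homogeneousComponent_of_mem (hprod _), ← sum_filter,
    esymm, powersetCard_eq_filter, map_prod, aeval_X]
  simp only [eq_comm]

theorem homogeneousComponent_prod_one_add_sub_one [CommRing R] {x : ι → MvPolynomial σ R}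
    (hx : ∀ i, (x i).IsHomogeneous 1) {t : ℕ} (ht : 0 < t) :
    homogeneousComponent t (∏ i, (1 + x i) - 1) = aeval x (esymm ι R t) := by
  rw [map_sub, homogeneousComponent_prod_one_add hx, homogeneousComponent_one, if_neg ht.ne',
    sub_zero]

theorem homogeneousComponent_zero_prod_one_add_sub_one [CommRing R] {x : ι → MvPolynomial σ R}
    (hx : ∀ i, (x i).IsHomogeneous 1) : homogeneousComponent 0 (∏ i, (1 + x i) - 1) = 0 := by
  rw [map_sub, homogeneousComponent_prod_one_add hx, esymm_zero, map_one, homogeneousComponent_one,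
    if_pos rfl, sub_self]

theorem mul_aeval_psum_eq_sub_sum [CommRing R] {S : Type*} [CommRing S] [Algebra R S]
    (x : ι → S) {s u : S} (hus : u * s = 1) {k : ℕ} (hk : 0 < k) :
    s * aeval x (psum ι R k) = (-1) ^ (k + 1) * k * (s * aeval x (esymm ι R k)) -
      ∑ a ∈ antidiagonal k with a.1 ∈ Set.Ioo 0 k,
        (-1) ^ a.1 * u * (s * aeval x (esymm ι R a.1)) * (s * aeval x (psum ι R a.2)) := by
  rw [psum_eq_mul_esymm_sub_sum ι R k hk]
  simp only [map_sub, map_sum, map_mul, map_pow, map_neg, map_one, map_natCast, mul_sub,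
    mul_sum]
  congr 1
  · ring
  · refine sum_congr rfl fun a _ => ?_
    linear_combination -(-1) ^ a.1 * s * aeval x (esymm ι R a.1) * aeval x (psum ι R a.2) * hus

end MvPolynomial

section Newton

variable {σ ι : Type*} [Fintype ι] {x : ι → MvPolynomial σ ℂ⸨X⸩} {s : ℂ⸨X⸩}

theorem ApproxTo.C_mul_aeval_esymm (hx : ∀ i, (x i).IsHomogeneous 1) {f : MvPolynomial σ ℂ}
    (h : ApproxTo (C s * ((∏ i, (1 + x i)) - 1)) f) {t : ℕ} (ht : 0 < t) :
    ApproxTo (C s * aeval x (esymm ι ℂ⸨X⸩ t)) (MvPolynomial.homogeneousComponent t f) := by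
  have := h.homogeneousComponent t
  rwa [homogeneousComponent_C_mul, homogeneousComponent_prod_one_add_sub_one hx ht] at this

variable {u : ℂ⟦X⟧}

theorem approxTo_C_mul_aeval_psum_of_forall_lt (hus : (u : ℂ⸨X⸩) * s = 1) {k : ℕ} (hk : 0 < k)
    (hE : ∀ i, 0 < i → i < k → ApproxTo (C s * aeval x (esymm ι ℂ⸨X⸩ i)) 0)
    (hP : ∀ j, 0 < j → j < k → ApproxTo (C s * aeval x (psum ι ℂ⸨X⸩ j)) 0)
    {g : MvPolynomial σ ℂ} (hEk : ApproxTo (C s * aeval x (esymm ι ℂ⸨X⸩ k)) g) :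
    ApproxTo (C s * aeval x (psum ι ℂ⸨X⸩ k)) (C ((-1 : ℂ) ^ (k + 1) * k) * g) := by
  have hus' : C (u : ℂ⸨X⸩) * C s = (1 : MvPolynomial σ ℂ⸨X⸩) := by rw [← map_mul, hus, map_one]
  rw [mul_aeval_psum_eq_sub_sum x hus' hk]
  have hlead : ApproxTo ((-1) ^ (k + 1) * k : MvPolynomial σ ℂ⸨X⸩)
      (C ((-1 : ℂ) ^ (k + 1) * k)) := by
    simpa using approxTo_C_coe (σ := σ) (PowerSeries.C ((-1) ^ (k + 1) * k : ℂ))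
  have hcorr : ApproxTo (∑ a ∈ antidiagonal k with a.1 ∈ Set.Ioo 0 k,
      (-1) ^ a.1 * C (u : ℂ⸨X⸩) * (C s * aeval x (esymm ι ℂ⸨X⸩ a.1)) *
        (C s * aeval x (psum ι ℂ⸨X⸩ a.2))) 0 := by
    rw [← sum_const_zero (M := MvPolynomial σ ℂ) (s := {a ∈ antidiagonal k | a.1 ∈ Set.Ioo 0 k})]
    refine ApproxTo.sum _ fun a ha => ?_
    rw [mem_filter, HasAntidiagonal.mem_antidiagonal, Set.mem_Ioo] at ha
    have hsign : ((-1) ^ a.1 * C (u : ℂ⸨X⸩) : MvPolynomial σ ℂ⸨X⸩)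
        = C ((PowerSeries.C ((-1 : ℂ) ^ a.1) * u : ℂ⟦X⟧) : ℂ⸨X⸩) := by
      simp
    have h1 := approxTo_C_coe (σ := σ) (PowerSeries.C ((-1 : ℂ) ^ a.1) * u)
    have h2 := (h1.mul (hE a.1 ha.2.1 ha.2.2)).mul (hP a.2 (by omega) (by omega))
    rwa [← hsign, mul_zero] at h2
  have := (hlead.mul hEk).sub hcorr
  rwa [sub_zero] at this

theorem approxTo_C_mul_aeval_psum (hus : (u : ℂ⸨X⸩) * s = 1) {d : ℕ} (hd : 0 < d)
    {f : MvPolynomial σ ℂ}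
    (hE : ∀ t, 0 < t → ApproxTo (C s * aeval x (esymm ι ℂ⸨X⸩ t)) (if t = d then f else 0)) :
    ApproxTo (C s * aeval x (psum ι ℂ⸨X⸩ d)) (C ((-1 : ℂ) ^ (d + 1) * d) * f) := by
  have hE_lt (i : ℕ) (hi : 0 < i) (hid : i < d) :
      ApproxTo (C s * aeval x (esymm ι ℂ⸨X⸩ i)) 0 := by
    simpa [hid.ne] using hE i hi
  have hP_lt (k : ℕ) (hk : 0 < k) (hkd : k < d) :
      ApproxTo (C s * aeval x (psum ι ℂ⸨X⸩ k)) 0 := by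
    induction k using Nat.strong_induction_on with
    | _ k ih =>
      simpa using approxTo_C_mul_aeval_psum_of_forall_lt hus hk
        (fun i hi hik => hE_lt i hi (hik.trans hkd)) (fun j hj hjk => ih j hjk hj (hjk.trans hkd))
        (hE_lt k hk hkd)
  exact approxTo_C_mul_aeval_psum_of_forall_lt hus hd hE_lt hP_lt (by simpa using hE d hd)

end Newton

theorem borderWaringRank_zero (n d : ℕ) : borderWaringRank (0 : MvPolynomial (Fin n) ℂ) d = 0 :=
  Nat.sInf_eq_zero.mpr <| Or.inl ⟨Fin.elim0, fun i => i.elim0, by simpa using approxTo_zero⟩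

theorem borderWaringRank_le_of_approxTo_C_mul_sum_pow {n m d : ℕ} (hd : 0 < d)
    {f : MvPolynomial (Fin n) ℂ} {ℓ : Fin m → MvPolynomial (Fin n) ℂ⸨X⸩}
    (hℓ : ∀ i, (ℓ i).IsHomogeneous 1) (M : ℤ) (γ : ℂ) {c : ℂ} (hc : c ≠ 0)
    (h : ApproxTo (C (HahnSeries.single M γ) * ∑ i, ℓ i ^ d) (C c * f)) :
    borderWaringRank f d ≤ m := by
  obtain ⟨β, hβ⟩ := IsAlgClosed.exists_pow_nat_eq (γ / c) hd
  set L : Fin m → MvPolynomial (Fin n) ℂ⸨X⸩ :=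
    fun i => C (HahnSeries.single M β) * map (LaurentSeries.expand d hd) (ℓ i)
  have hL : ∀ i, (L i).IsHomogeneous 1 := fun i => by
    simpa using (isHomogeneous_C _ _).mul ((hℓ i).map _)
  have hβM : HahnSeries.single M β ^ d = HahnSeries.single (d * M) (c⁻¹ * γ) := by
    rw [HahnSeries.single_pow, hβ, nsmul_eq_mul, div_eq_inv_mul]
  have hsum : ∑ i, L i ^ d = map (LaurentSeries.expand d hd)
      (C ((PowerSeries.C c⁻¹ : ℂ⟦X⟧) : ℂ⸨X⸩) * (C (HahnSeries.single M γ) * ∑ i, ℓ i ^ d)) := by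
    rw [map_mul, map_mul, map_C, map_C, ← mul_assoc, ← map_mul, PowerSeries.coe_C,
      HahnSeries.C_apply, LaurentSeries.expand_single, LaurentSeries.expand_single,
      HahnSeries.single_mul_single, mul_zero, zero_add, ← hβM, map_sum, Finset.mul_sum]
    simp only [L, mul_pow, map_pow]
  have happrox := ((approxTo_C_coe (PowerSeries.C c⁻¹)).mul h).map_expand hd
  rw [← hsum, PowerSeries.constantCoeff_C, ← mul_assoc, ← map_mul, inv_mul_cancel₀ hc,
    map_one, one_mul] at happrox
  exact Nat.sInf_le ⟨L, hL, happrox⟩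

theorem statement11_general {n d m : ℕ} (f : MvPolynomial (Fin n) ℂ) (hf : f.IsHomogeneous d)
    (γ : ℂ) (M : ℕ)
    (ℓ : Fin m → MvPolynomial (Fin n) (LaurentSeries ℂ))
    (hhom : ∀ i, (ℓ i).IsHomogeneous 1)
    (happrox : ApproxTo
      (C (HahnSeries.single (-(M : ℤ)) γ) * ((∏ i, (1 + ℓ i)) - 1)) f) :
    borderWaringRank f d ≤ m := by
  obtain rfl | hd := d.eq_zero_or_pos
  · have h0 := happrox.homogeneousComponent 0
    rw [homogeneousComponent_C_mul, homogeneousComponent_zero_prod_one_add_sub_one hhom, mul_zero,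
      homogeneousComponent_eq_self hf] at h0
    obtain rfl : f = 0 := (approxTo_zero.unique h0).symm
    exact (borderWaringRank_zero n 0).trans_le (Nat.zero_le m)
  obtain rfl | hγ := eq_or_ne γ 0
  · obtain rfl : f = 0 := (approxTo_zero.unique (by simpa using happrox)).symm
    exact (borderWaringRank_zero n d).trans_le (Nat.zero_le m)
  have hus : ((PowerSeries.C γ⁻¹ * PowerSeries.X ^ M : ℂ⟦X⟧) : ℂ⸨X⸩) *
      HahnSeries.single (-(M : ℤ)) γ = 1 := by
    rw [map_mul, HahnSeries.ofPowerSeries_C, HahnSeries.ofPowerSeries_X_pow, HahnSeries.C_apply,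
      HahnSeries.single_mul_single, HahnSeries.single_mul_single, mul_one, inv_mul_cancel₀ hγ]
    simp
  have hP := approxTo_C_mul_aeval_psum hus hd fun t ht => by
    simpa only [homogeneousComponent_of_mem hf] using happrox.C_mul_aeval_esymm hhom ht
  simp only [psum, map_sum, map_pow, aeval_X] at hP
  refine borderWaringRank_le_of_approxTo_C_mul_sum_pow hd hhom _ γ ?_ hP
  exact mul_ne_zero (pow_ne_zero _ (neg_ne_zero.mpr one_ne_zero)) (Nat.cast_ne_zero.mpr hd.ne')

/-- Border Newton identities: if `f ≡ γ ε^{-M} (∏ (1 + ℓ'ᵢ) - 1) (mod ε)` with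
`M ≥ 1`, then the border Waring rank of `f` is at most `m`. -/
theorem statement11 {n d m : ℕ} (f : MvPolynomial (Fin n) ℂ) (hf : f.IsHomogeneous d)
    (γ : ℂ) (M : ℕ) (hM : 1 ≤ M)
    (ℓ : Fin m → MvPolynomial (Fin n) (LaurentSeries ℂ))
    (hhom : ∀ i, (ℓ i).IsHomogeneous 1)
    (happrox : ApproxTo
      (C (HahnSeries.single (-(M : ℤ)) γ) * ((∏ i, (1 + ℓ i)) - 1)) f) :
    borderWaringRank f d ≤ m :=
  statement11_general f hf γ M ℓ hhom happrox
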